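/- In the Jordan plane over a field of characteristic p > 2, the coproduct (in the braided Hopf algebra structure with x, y primitive) satisfies Δ(y^{pℓ}) = y^{pℓ} ⊗ 1 + 1 ⊗ y^{pℓ} + ∑_{t=1}^{ℓ−1} binom(ℓ,t) y^{pt} ⊗ y^{p(ℓ−t)} for all ℓ ≥ 1; in particular y^p and x^p are primitive. -/

import Mathlib

open scoped TensorProduct

/-- The raising factorial `[t]^{[k]} = t(t+1)⋯(t+k-1)`. -/
noncomputable def raise {K : Type*} [Field K] (t : K) (k : ℕ) : K :=
  ∏ i ∈ Finset.range k, (t + i)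

/-- Defining relation of the Jordan plane `k⟨x,y⟩/(yx - xy + (1/2)x²)`,
with `x = ι 0`, `y = ι 1`. -/
inductive JpRel (K : Type*) [Field K] :
    FreeAlgebra K (Fin 2) → FreeAlgebra K (Fin 2) → Prop
  | comm : JpRel K (FreeAlgebra.ι K (1 : Fin 2) * FreeAlgebra.ι K (0 : Fin 2))
      (FreeAlgebra.ι K (0 : Fin 2) * FreeAlgebra.ι K (1 : Fin 2)
        - (1/2 : K) • (FreeAlgebra.ι K (0 : Fin 2)) ^ 2)

/-- The Jordan plane. -/
noncomputable abbrev Jp (K : Type*) [Field K] := RingQuot (JpRel K)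

noncomputable abbrev Jx (K : Type*) [Field K] : Jp K :=
  RingQuot.mkAlgHom K (JpRel K) (FreeAlgebra.ι K (0 : Fin 2))
noncomputable abbrev Jy (K : Type*) [Field K] : Jp K :=
  RingQuot.mkAlgHom K (JpRel K) (FreeAlgebra.ι K (1 : Fin 2))

/-!
By Lucas's theorem, `C(pℓ, k)` vanishes in characteristic `p` unless `k = pt`, and then it equals
`C(ℓ, t)`. For `k = pt` the argument `k - pℓ` of the raising factorial is `0` in `K`, and
`[0]^{[i]} = 0` for `i > 0`, so of the inner sum over `i` only the term `i = 0`, namely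
`y^{pt} ⊗ y^{p(ℓ-t)}`, survives. The case of `x^p` is `ℓ = 1`.
-/

open Finset

lemma raise_zero {K : Type*} [Field K] {i : ℕ} (hi : i ≠ 0) : raise (0 : K) i = 0 :=
  prod_eq_zero (i := 0) (mem_range.2 (Nat.pos_of_ne_zero hi)) (by simp)

lemma Finset.sum_range_mul_succ_eq_sum_range_succ {M : Type*} [AddCommMonoid M] {p : ℕ}
    (hp : 0 < p) (ℓ : ℕ) {f : ℕ → M} (hf : ∀ k, ¬ p ∣ k → f k = 0) :
    ∑ k ∈ range (p * ℓ + 1), f k = ∑ t ∈ range (ℓ + 1), f (p * t) := by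
  rw [← sum_image fun a _ b _ h => Nat.eq_of_mul_eq_mul_left hp h]
  refine (sum_subset ?_ ?_).symm
  · intro k hk
    obtain ⟨t, ht, rfl⟩ := mem_image.1 hk
    simp only [mem_range] at ht ⊢
    nlinarith
  · rintro k hk hk'
    refine hf k fun ⟨t, ht⟩ => hk' (mem_image.2 ⟨t, ?_, ht.symm⟩)
    subst ht
    simp only [mem_range] at hk ⊢
    nlinarith

lemma Finset.sum_range_succ_eq_add_add_sum_Ioo {M : Type*} [AddCommMonoid M] {n : ℕ}
    (hn : 0 < n) (f : ℕ → M) :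
    ∑ t ∈ range (n + 1), f t = f 0 + f n + ∑ t ∈ Ioo 0 n, f t := by
  rw [Nat.range_succ_eq_Icc_zero, ← add_sum_Ioc_eq_sum_Icc (Nat.zero_le n),
    ← sum_Ioo_add_eq_sum_Ioc hn]
  abel

section Lucas

variable {p : ℕ} [Fact p.Prime] {R : Type*} [Semiring R] [CharP R p]

lemma Nat.cast_choose_mul_of_not_dvd (ℓ : ℕ) {k : ℕ} (hk : ¬ p ∣ k) :
    ((p * ℓ).choose k : R) = 0 := by
  have h := Choose.choose_modEq_choose_mod_mul_choose_div_nat (n := p * ℓ) (k := k) (p := p)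
  have hkp : 0 < k % p := Nat.pos_of_ne_zero fun h0 => hk (Nat.dvd_of_mod_eq_zero h0)
  rw [Nat.mul_mod_right, Nat.choose_eq_zero_of_lt hkp, zero_mul] at h
  simpa using CharP.natCast_eq_natCast' R p h

lemma Nat.cast_choose_mul_mul (ℓ t : ℕ) : ((p * ℓ).choose (p * t) : R) = ℓ.choose t :=
  CharP.natCast_eq_natCast' R p Choose.choose_mul_mul_modEq_choose_nat

lemma sum_range_choose_mul_smul {M : Type*} [AddCommMonoid M] [Module R M] (ℓ : ℕ) (f : ℕ → M) :
    ∑ k ∈ range (p * ℓ + 1), ((p * ℓ).choose k : R) • f k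
      = ∑ t ∈ range (ℓ + 1), (ℓ.choose t : R) • f (p * t) := by
  rw [sum_range_mul_succ_eq_sum_range_succ (Fact.out : p.Prime).pos ℓ
    fun k hk => by rw [Nat.cast_choose_mul_of_not_dvd ℓ hk, zero_smul]]
  simp only [Nat.cast_choose_mul_mul]

end Lucas

lemma sum_range_choose_smul_pow_tmul_pow {p : ℕ} [Fact p.Prime] {R A : Type*} [CommSemiring R]
    [CharP R p] [Semiring A] [Algebra R A] (x : A) :
    ∑ k ∈ range (p + 1), (p.choose k : R) • ((x ^ (p - k)) ⊗ₜ[R] (x ^ k))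
      = (x ^ p) ⊗ₜ[R] (1 : A) + (1 : A) ⊗ₜ[R] (x ^ p) := by
  simpa [sum_range_succ] using
    sum_range_choose_mul_smul (R := R) (p := p) 1 fun k => (x ^ (p - k)) ⊗ₜ[R] (x ^ k)

lemma sum_braided_coproduct_pow_prime_mul {p : ℕ} [Fact p.Prime] {K A : Type*} [Field K]
    [CharP K p] [Semiring A] [Algebra K A] (x y : A) {ℓ : ℕ} (hℓ : 1 ≤ ℓ) :
    ∑ k ∈ range (p * ℓ + 1), ∑ i ∈ range (k + 1),
        (((p * ℓ).choose k : K) * (k.choose i : K) * (-1) ^ i *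
            raise ((k : K) - (p : K) * (ℓ : K)) i / 2 ^ i) •
          ((x ^ i * y ^ (k - i)) ⊗ₜ[K] (y ^ (p * ℓ - k)))
      = (y ^ (p * ℓ)) ⊗ₜ[K] (1 : A) + (1 : A) ⊗ₜ[K] (y ^ (p * ℓ))
          + ∑ t ∈ Ioo 0 ℓ, (ℓ.choose t : K) • ((y ^ (p * t)) ⊗ₜ[K] (y ^ (p * (ℓ - t)))) := by
  have hfactor : ∀ k i : ℕ, ((p * ℓ).choose k : K) * (k.choose i : K) * (-1) ^ i *
      raise ((k : K) - p * ℓ) i / 2 ^ i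
        = ((p * ℓ).choose k : K) * ((k.choose i : K) * (-1) ^ i *
      raise ((k : K) - p * ℓ) i / 2 ^ i) := fun _ _ => by ring
  simp_rw [hfactor, mul_smul, ← smul_sum]
  rw [sum_range_choose_mul_smul (R := K) ℓ fun k => ∑ i ∈ range (k + 1),
    ((k.choose i : K) * (-1) ^ i * raise ((k : K) - p * ℓ) i / 2 ^ i) •
      ((x ^ i * y ^ (k - i)) ⊗ₜ[K] (y ^ (p * ℓ - k)))]
  have hdiag : ∀ t, ∑ i ∈ range (p * t + 1),
      (((p * t).choose i : K) * (-1) ^ i * raise (((p * t : ℕ) : K) - p * ℓ) i / 2 ^ i) •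
        ((x ^ i * y ^ (p * t - i)) ⊗ₜ[K] (y ^ (p * ℓ - p * t)))
      = (y ^ (p * t)) ⊗ₜ[K] (y ^ (p * (ℓ - t))) := by
    intro t
    rw [sum_eq_single_of_mem 0 (by simp)]
    · simp [raise, Nat.mul_sub]
    · intro i _ hi
      have hzero : ((p * t : ℕ) : K) - p * ℓ = 0 := by simp [CharP.cast_eq_zero]
      rw [hzero, raise_zero hi]
      simp
  simp only [hdiag]
  rw [sum_range_succ_eq_add_add_sum_Ioo hℓ]
  simp [add_comm]

theorem stmt15 (p : ℕ) [Fact p.Prime] (K : Type*) [Field K] [CharP K p] :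
    (∀ ℓ : ℕ, 1 ≤ ℓ →
      (∑ k ∈ Finset.range (p * ℓ + 1), ∑ i ∈ Finset.range (k + 1),
        (((p * ℓ).choose k : K) * (k.choose i : K) * (-1) ^ i *
            raise ((k : K) - (p : K) * (ℓ : K)) i / 2 ^ i) •
          ((Jx K ^ i * Jy K ^ (k - i)) ⊗ₜ[K] (Jy K ^ (p * ℓ - k))))
        = (Jy K ^ (p * ℓ)) ⊗ₜ[K] (1 : Jp K) + (1 : Jp K) ⊗ₜ[K] (Jy K ^ (p * ℓ))
          + ∑ t ∈ Finset.Ioo 0 ℓ,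
              (ℓ.choose t : K) • ((Jy K ^ (p * t)) ⊗ₜ[K] (Jy K ^ (p * (ℓ - t))))) ∧
    (∑ k ∈ Finset.range (p + 1), ((p.choose k : K)) • ((Jx K ^ (p - k)) ⊗ₜ[K] (Jx K ^ k)))
      = (Jx K ^ p) ⊗ₜ[K] (1 : Jp K) + (1 : Jp K) ⊗ₜ[K] (Jx K ^ p) :=
  ⟨fun _ hℓ => sum_braided_coproduct_pow_prime_mul (Jx K) (Jy K) hℓ,
    sum_range_choose_smul_pow_tmul_pow (Jx K)⟩
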